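/- Fix an integer m ≥ 0 and ε > 0. Let F be a continuous unbounded CDF, let M_K be a sequence of integers with M_K → ∞, M_K/K → 0 and M_K ≥ (m+1)(1+ε)·ln K, and set L_K = q̄_F(e²·M_K/K), where q̄_F(p) = min{x : F(x) ≥ 1 − p}. (1) There exists K₀ such that for all K > K₀: whenever X_1,…,X_K are identically distributed with CDF F and m-dependent, P(X_{(K−M_K+1)} ≥ L_K) ≥ 1 − 2(m+1)/K^{4(1+ε)}. (2) If for each of N = K rows the variables X_{n,1},…,X_{n,K} are identically distributed with CDF F and m-dependent, then P(min_{1≤n≤N} X_{n,(K−M_K+1)} ≥ L_K) → 1 as K → ∞. -/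

import Mathlib

/-!
Put `p = e² M / K` and `L = q̄_F(p)`. Since `F` is continuous, `F L ≤ 1 - p`, so each `X_k` is
at least `L` with probability at least `p`. The order statistic `X_{(K-M+1)}` lies below `L` only
if fewer than `M` of the `X_k` reach `L`; splitting the indices into the `m + 1` residue classes
mod `m + 1`, some class then contains at most `M/(m+1)` of them. Inside one class the indices are
more than `m` apart, so the indicators are independent, and the Chernoff bound at `t = 2` gives
probability at most `exp (2M/(m+1) - n (e² - 1) M / K)` for a class of size `n ≈ K/(m+1)`.
As `e² - 1 > 6`, this is at most `exp (-4M/(m+1)) ≤ K^(-4(1+ε))`. A union bound over the classes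
gives (1), and another one over the `K` rows gives (2).
-/

open MeasureTheory ProbabilityTheory Filter

/-- The cumulative distribution function of a real random variable `X` under `μ`. -/
noncomputable def cdfOf {Ω : Type*} [MeasurableSpace Ω] (μ : Measure Ω) (X : Ω → ℝ) : ℝ → ℝ :=
  fun x => (μ {ω | X ω ≤ x}).toReal

/-- `orderStat v j` is the `j`-th smallest value (1-indexed) among `v 0, …, v (K-1)`. -/
noncomputable def orderStat {K : ℕ} (v : Fin K → ℝ) (j : ℕ) : ℝ :=
  ((Finset.univ.val.map v).sort (· ≤ ·)).getD (j - 1) 0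

/-- A finite family of random variables is `m`-dependent: every subfamily whose indices are
pairwise more than `m` apart is jointly independent. -/
def MDepFam {Ω β : Type*} [MeasurableSpace Ω] [MeasurableSpace β] (μ : Measure Ω) (m : ℕ)
    {K : ℕ} (X : Fin K → Ω → β) : Prop :=
  ∀ S : Finset (Fin K),
    (∀ i ∈ S, ∀ j ∈ S, i ≠ j → (m : ℤ) < |(i : ℤ) - (j : ℤ)|) →
    iIndepFun (fun i : S => X i.1) μ

/-- `F` has an exponentially-dominated tail with parameters `(α, β, lam, γ)`:
`(1 - F x)/(α x^β e^{-lam x^γ}) → 1` as `x → ∞`. -/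
def ExpDomTail (F : ℝ → ℝ) (α β lam γ : ℝ) : Prop :=
  Tendsto (fun x : ℝ => (1 - F x) / (α * x ^ β * Real.exp (-lam * x ^ γ))) atTop (nhds 1)

/-- Tail quantile function `q̄_F(p) = min {x | F x ≥ 1 - p}` (as an infimum). -/
noncomputable def tailQuantile (F : ℝ → ℝ) (p : ℝ) : ℝ := sInf {x | 1 - p ≤ F x}

open Finset
open Real (exp)

section OrderStatistics

theorem List.Pairwise.le_getElem_iff_length_sub_le_countP {α : Type*} [LinearOrder α]
    {l : List α} (hl : l.Pairwise (· ≤ ·)) (a : α) {i : ℕ} (hi : i < l.length) :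
    a ≤ l[i] ↔ l.length - i ≤ l.countP (a ≤ ·) := by
  have hsplit := l.take_append_drop i
  rw [List.drop_eq_getElem_cons hi] at hsplit
  rw [← hsplit, List.pairwise_append, List.pairwise_cons] at hl
  obtain ⟨-, ⟨hhead, -⟩, hprefix⟩ := hl
  constructor
  · intro ha
    calc l.length - i = (l.drop i).countP (a ≤ ·) := by
          rw [List.countP_eq_length.mpr, List.length_drop]
          rw [List.drop_eq_getElem_cons hi]
          simp only [List.mem_cons, decide_eq_true_eq]
          rintro x (rfl | hx)
          exacts [ha, ha.trans (hhead x hx)]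
      _ ≤ l.countP (a ≤ ·) := (List.drop_sublist i l).countP_le
  · intro hcount
    by_contra! ha
    have htake : (l.take (i + 1)).countP (a ≤ ·) = 0 := by
      rw [List.countP_eq_zero, List.take_add_one, List.getElem?_eq_getElem hi]
      simp only [Option.toList_some, List.mem_append, List.mem_singleton, decide_eq_true_eq,
        not_le]
      rintro x (hx | rfl)
      exacts [(hprefix x hx _ List.mem_cons_self).trans_lt ha, ha]
    have hsum := l.take_append_drop (i + 1) ▸
      List.countP_append (p := (a ≤ ·)) (l₁ := l.take (i + 1)) (l₂ := l.drop (i + 1))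
    have hdrop := (l.drop (i + 1)).countP_le_length (p := (a ≤ ·))
    rw [List.length_drop] at hdrop
    omega

theorem le_orderStat_iff {K : ℕ} (v : Fin K → ℝ) {M : ℕ} (hM : 1 ≤ M) (hMK : M ≤ K) (a : ℝ) :
    a ≤ orderStat v (K - M + 1) ↔ M ≤ #{k | a ≤ v k} := by
  have hsorted := Multiset.pairwise_sort (univ.val.map v) (· ≤ ·)
  have hlen : ((univ.val.map v).sort (· ≤ ·)).length = K := by simp
  have hi : K - M < ((univ.val.map v).sort (· ≤ ·)).length := by omega
  have hcount : ((univ.val.map v).sort (· ≤ ·)).countP (a ≤ ·) = #{k | a ≤ v k} := by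
    rw [← Multiset.coe_countP, Multiset.sort_eq, Multiset.countP_map]
    rfl
  rw [orderStat, Nat.add_sub_cancel, List.getD_eq_getElem _ _ hi,
    hsorted.le_getElem_iff_length_sub_le_countP a hi, hcount, hlen]
  omega

end OrderStatistics

section TailQuantile

theorem cdfOf_eq_cdf_map {Ω : Type*} [MeasurableSpace Ω] (μ : Measure Ω) [IsProbabilityMeasure μ]
    {X : Ω → ℝ} (hX : Measurable X) : cdfOf μ X = cdf (μ.map X) := by
  have := Measure.isProbabilityMeasure_map (μ := μ) hX.aemeasurable
  funext x
  rw [cdf_eq_real, map_measureReal_apply hX measurableSet_Iic]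
  rfl

theorem cdf_tailQuantile_le (ν : Measure ℝ) [IsProbabilityMeasure ν] (hcont : Continuous (cdf ν))
    {p : ℝ} (hp0 : 0 < p) (hp1 : p < 1) : cdf ν (tailQuantile (cdf ν) p) ≤ 1 - p := by
  obtain ⟨a, ha⟩ : ∃ a, cdf ν a < 1 - p :=
    ((tendsto_cdf_atBot ν).eventually (eventually_lt_nhds (by linarith))).exists
  obtain ⟨b, hb⟩ : ∃ b, 1 - p < cdf ν b :=
    ((tendsto_cdf_atTop ν).eventually (eventually_gt_nhds (by linarith))).exists
  obtain ⟨x, hx⟩ := intermediate_value_univ a b hcont ⟨ha.le, hb.le⟩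
  have hbdd : BddBelow {y | 1 - p ≤ cdf ν y} :=
    ⟨a, fun y hy => ((monotone_cdf ν).reflect_lt (ha.trans_le hy)).le⟩
  calc cdf ν (tailQuantile (cdf ν) p) ≤ cdf ν x := monotone_cdf ν (csInf_le hbdd hx.ge)
    _ = 1 - p := hx

theorem le_measureReal_Ici_tailQuantile (ν : Measure ℝ) [IsProbabilityMeasure ν]
    (hcont : Continuous (cdf ν)) {p : ℝ} (hp0 : 0 < p) (hp1 : p < 1) :
    p ≤ ν.real (Set.Ici (tailQuantile (cdf ν) p)) := by
  set q := tailQuantile (cdf ν) p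
  calc p ≤ 1 - cdf ν q := by linarith [cdf_tailQuantile_le ν hcont hp0 hp1]
    _ = ν.real (Set.Iic q)ᶜ := by rw [probReal_compl_eq_one_sub measurableSet_Iic, cdf_eq_real]
    _ ≤ ν.real (Set.Ici q) := measureReal_mono fun x (hx : ¬x ≤ q) => (not_le.mp hx).le

theorem le_measureReal_tailQuantile_le {Ω : Type*} [MeasurableSpace Ω] (μ : Measure Ω)
    [IsProbabilityMeasure μ] {X : Ω → ℝ} (hX : Measurable X) (hcont : Continuous (cdfOf μ X))
    {p : ℝ} (hp0 : 0 < p) (hp1 : p < 1) :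
    p ≤ μ.real {ω | tailQuantile (cdfOf μ X) p ≤ X ω} := by
  have : IsProbabilityMeasure (μ.map X) := Measure.isProbabilityMeasure_map hX.aemeasurable
  rw [cdfOf_eq_cdf_map μ hX] at hcont ⊢
  have := le_measureReal_Ici_tailQuantile (μ.map X) hcont hp0 hp1
  rwa [map_measureReal_apply hX measurableSet_Ici] at this

end TailQuantile

section Chernoff

theorem exp_mul_indicator_one {α : Type*} (A : Set α) (t : ℝ) (x : α) :
    exp (t * A.indicator 1 x) = 1 + (exp t - 1) * A.indicator 1 x := by
  by_cases hx : x ∈ A <;> simp [hx]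

variable {Ω : Type*} [MeasurableSpace Ω] {μ : Measure Ω}

theorem ProbabilityTheory.iIndepFun.iIndepSet_preimage {ι : Type*} {β : ι → Type*}
    [∀ i, MeasurableSpace (β i)] {X : ∀ i, Ω → β i} (h : iIndepFun X μ)
    (hX : ∀ i, Measurable (X i)) {s : ∀ i, Set (β i)} (hs : ∀ i, MeasurableSet (s i)) :
    iIndepSet (fun i => X i ⁻¹' s i) μ :=
  (iIndepSet_iff_meas_biInter fun i => hX i (hs i)).2 fun S =>
    iIndepFun_iff_measure_inter_preimage_eq_mul.1 h S fun i _ => hs i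

theorem integrable_exp_mul_indicator_one [IsFiniteMeasure μ] {A : Set Ω} (hA : MeasurableSet A)
    (t : ℝ) : Integrable (fun ω => exp (t * A.indicator 1 ω)) μ := by
  simp_rw [exp_mul_indicator_one]
  exact (integrable_const 1).add (((integrable_const 1).indicator hA).const_mul _)

theorem mgf_indicator_one [IsProbabilityMeasure μ] {A : Set Ω} (hA : MeasurableSet A) (t : ℝ) :
    mgf (A.indicator 1) μ t = 1 + (exp t - 1) * μ.real A := by
  simp_rw [mgf, exp_mul_indicator_one]
  rw [integral_add (integrable_const 1) (((integrable_const 1).indicator hA).const_mul _),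
    integral_const_mul, integral_indicator_one hA]
  simp

theorem measureReal_sum_indicator_le_le [IsProbabilityMeasure μ] {ι : Type*} [Fintype ι]
    {A : ι → Set Ω} (hA : ∀ i, MeasurableSet (A i)) (hind : iIndepSet A μ) {p t : ℝ} (ht : 0 ≤ t)
    (hp : ∀ i, p ≤ μ.real (A i)) (c : ℝ) :
    μ.real {ω | ∑ i, (A i).indicator 1 ω ≤ c} ≤
      exp (t * c - Fintype.card ι * ((1 - exp (-t)) * p)) := by
  set Y : ι → Ω → ℝ := fun i => (A i).indicator 1
  have hYind : iIndepFun Y μ := hind.iIndepFun_indicator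
  have hYm : ∀ i, Measurable (Y i) := fun i => measurable_one.indicator (hA i)
  have hmgf : ∀ i, mgf (Y i) μ (-t) ≤ exp (-((1 - exp (-t)) * p)) := fun i => by
    have : exp (-t) ≤ 1 := Real.exp_le_one_iff.2 (by linarith)
    calc mgf (Y i) μ (-t) = 1 + (exp (-t) - 1) * μ.real (A i) := mgf_indicator_one (hA i) _
      _ ≤ -((1 - exp (-t)) * p) + 1 := by nlinarith [hp i]
      _ ≤ exp (-((1 - exp (-t)) * p)) := Real.add_one_le_exp _
  calc μ.real {ω | ∑ i, (A i).indicator 1 ω ≤ c}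
      = μ.real {ω | (∑ i, Y i) ω ≤ c} := by simp only [Y, Finset.sum_apply]
    _ ≤ exp (t * c) * mgf (∑ i, Y i) μ (-t) := by
      simpa using measure_le_le_exp_mul_mgf c (neg_nonpos.2 ht)
        (hYind.integrable_exp_mul_sum hYm fun i _ => integrable_exp_mul_indicator_one (hA i) _)
    _ ≤ exp (t * c) * exp (-((1 - exp (-t)) * p)) ^ Fintype.card ι := by
      rw [hYind.mgf_sum hYm, ← Finset.card_univ, ← Finset.prod_const]
      exact mul_le_mul_of_nonneg_left (prod_le_prod (fun i _ => mgf_nonneg) fun i _ => hmgf i)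
        (Real.exp_pos _).le
    _ = exp (t * c - Fintype.card ι * ((1 - exp (-t)) * p)) := by
      rw [← Real.exp_nat_mul, ← Real.exp_add]
      ring_nf

end Chernoff

section ResidueClasses

def residueClass (K d r : ℕ) : Finset (Fin K) := {k | (k : ℕ) % d = r}

theorem div_le_card_residueClass (K : ℕ) {d r : ℕ} (hd : 0 < d) (hr : r < d) :
    K / d ≤ #(residueClass K d r) := by
  have : #(residueClass K d r) = Nat.count (· ≡ r [MOD d]) K := by
    rw [Nat.count_eq_card_filter_range, ← card_map Fin.valEmbedding]
    congr 1
    ext x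
    simp only [residueClass, Finset.mem_map, mem_filter, mem_univ, true_and,
      Fin.valEmbedding_apply, mem_range, Nat.ModEq, Nat.mod_eq_of_lt hr]
    exact ⟨by rintro ⟨k, hk, rfl⟩; exact ⟨k.2, hk⟩, fun ⟨hx, hr⟩ => ⟨⟨x, hx⟩, hr, rfl⟩⟩
  rw [this, Nat.count_modEq_card K hd]
  exact Nat.le_add_right _ _

theorem lt_abs_sub_of_mod_eq {m i j : ℕ} (h : i % (m + 1) = j % (m + 1)) (hij : i ≠ j) :
    (m : ℤ) < |(i : ℤ) - j| := by
  by_contra! hle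
  exact hij (Nat.ModEq.eq_of_abs_lt h (by rw [abs_sub_comm]; omega))

theorem MDepFam.iIndepFun_residueClass {Ω β : Type*} [MeasurableSpace Ω] [MeasurableSpace β]
    {μ : Measure Ω} {m K : ℕ} {X : Fin K → Ω → β} (h : MDepFam μ m X) (r : ℕ) :
    iIndepFun (fun i : residueClass K (m + 1) r => X i.1) μ :=
  h _ fun _ hi _ hj hij => lt_abs_sub_of_mod_eq
    (((mem_filter.1 hi).2).trans (mem_filter.1 hj).2.symm) (Fin.val_ne_of_ne hij)

theorem exists_card_residueClass_le {K : ℕ} (v : Fin K → ℝ) (a : ℝ) (m : ℕ) {M : ℕ}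
    (h : #{k | a ≤ v k} < M) :
    ∃ r < m + 1, (#{k ∈ residueClass K (m + 1) r | a ≤ v k} : ℝ) ≤ M / (m + 1) := by
  have hsplit :
      #{k | a ≤ v k} = ∑ r ∈ range (m + 1), #{k ∈ residueClass K (m + 1) r | a ≤ v k} := by
    rw [card_eq_sum_card_fiberwise (t := range (m + 1)) (f := fun k : Fin K => (k : ℕ) % (m + 1))
      fun k _ => mem_range.2 (Nat.mod_lt _ m.succ_pos)]
    simp only [residueClass, filter_filter, and_comm]
  have hsum : ∑ r ∈ range (m + 1), (#{k ∈ residueClass K (m + 1) r | a ≤ v k} : ℝ) ≤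
      ∑ _r ∈ range (m + 1), (M / (m + 1) : ℝ) := by
    rw [sum_const, card_range, nsmul_eq_mul, Nat.cast_add_one, mul_div_cancel₀ _ (by positivity)]
    exact_mod_cast hsplit ▸ h.le
  obtain ⟨r, hr, hle⟩ := exists_le_of_sum_le (nonempty_range_iff.2 m.succ_ne_zero) hsum
  exact ⟨r, mem_range.1 hr, hle⟩

end ResidueClasses

section RowBound

theorem exp_two_gt_d2 : 7.38 < exp 2 := by
  have h := Real.exp_one_gt_d9
  rw [show (2 : ℝ) = 1 + 1 by norm_num, Real.exp_add]
  nlinarith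

theorem exp_two_lt_eight : exp 2 < 8 := by
  have h := Real.exp_one_lt_d9
  rw [show (2 : ℝ) = 1 + 1 by norm_num, Real.exp_add]
  nlinarith [Real.exp_pos 1]

theorem chernoff_exponent_le {K M d n ℓ : ℝ} (hd : 1 ≤ d) (hK : 20 * d ≤ K) (hn : K - d ≤ d * n)
    (hM : 0 ≤ M) (hℓ : d * ℓ ≤ M) :
    2 * (M / d) - n * ((1 - exp (-2)) * (exp 2 * M / K)) ≤ -4 * ℓ := by
  have hd0 : 0 < d := by linarith
  have hK0 : 0 < K := by linarith
  have hclass : 6 * K ≤ d * n * (exp 2 - 1) := by nlinarith [exp_two_gt_d2]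
  have hmean : 6 * (M / d) ≤ n * ((1 - exp (-2)) * (exp 2 * M / K)) :=
    calc 6 * (M / d) = 6 * K * M / (d * K) := by field_simp
      _ ≤ d * n * (exp 2 - 1) * M / (d * K) := by gcongr
      _ = n * ((1 - exp (-2)) * (exp 2 * M / K)) := by rw [Real.exp_neg]; field_simp
  have hℓ' : ℓ ≤ M / d := by rw [le_div_iff₀ hd0]; linarith
  linarith

variable {Ω : Type*} [MeasurableSpace Ω] {μ : Measure Ω} [IsProbabilityMeasure μ]

theorem measureReal_card_residueClass_le_le {m K : ℕ} {X : Fin K → Ω → ℝ}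
    (hX : ∀ k, Measurable (X k)) (hdep : MDepFam μ m X) {a p t : ℝ} (ht : 0 ≤ t)
    (hp : ∀ k, p ≤ μ.real {ω | a ≤ X k ω}) (r : ℕ) (c : ℝ) :
    μ.real {ω | (#{k ∈ residueClass K (m + 1) r | a ≤ X k ω} : ℝ) ≤ c} ≤
      exp (t * c - #(residueClass K (m + 1) r) * ((1 - exp (-t)) * p)) := by
  have := measureReal_sum_indicator_le_le
    (A := fun i : residueClass K (m + 1) r => X i ⁻¹' Set.Ici a) (fun i => hX i measurableSet_Ici)
    ((hdep.iIndepFun_residueClass r).iIndepSet_preimage (fun i => hX i)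
      fun _ => measurableSet_Ici) ht (fun i => hp i) c
  rw [Fintype.card_coe] at this
  convert this using 4 with ω
  rw [Finset.sum_coe_sort (residueClass K (m + 1) r) fun k => (X k ⁻¹' Set.Ici a).indicator 1 ω]
  classical
  simp [Set.indicator_apply]

theorem measure_orderStat_lt_tailQuantile_le {m K M : ℕ} {F : ℝ → ℝ} (hF : Continuous F)
    {X : Fin K → Ω → ℝ} (hX : ∀ k, Measurable (X k)) (hcdf : ∀ k, cdfOf μ (X k) = F)
    (hdep : MDepFam μ m X) (hM : 1 ≤ M) (hMK : 8 * M ≤ K) (hK : 20 * (m + 1) ≤ K) {ℓ : ℝ}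
    (hℓ : (m + 1) * ℓ ≤ M) :
    μ {ω | orderStat (fun k => X k ω) (K - M + 1) < tailQuantile F (exp 2 * M / K)} ≤
      ENNReal.ofReal ((m + 1) * exp (-4 * ℓ)) := by
  set p := exp 2 * M / K
  set L := tailQuantile F p
  have hK0 : (0 : ℝ) < K := by norm_cast; omega
  have hp0 : 0 < p := by positivity
  have hp1 : p < 1 := by
    have hM0 : (0 : ℝ) < M := by norm_cast
    rw [div_lt_one hK0]
    calc exp 2 * M < 8 * M := by gcongr; exact exp_two_lt_eight
      _ ≤ K := by exact_mod_cast hMK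
  have htail : ∀ k, p ≤ μ.real {ω | L ≤ X k ω} := fun k => by
    simpa [L, hcdf k] using le_measureReal_tailQuantile_le μ (hX k) (hcdf k ▸ hF) hp0 hp1
  have hbad : {ω | orderStat (fun k => X k ω) (K - M + 1) < L} ⊆ ⋃ r ∈ range (m + 1),
      {ω | (#{k ∈ residueClass K (m + 1) r | L ≤ X k ω} : ℝ) ≤ M / (m + 1)} := by
    intro ω (hω : orderStat _ _ < L)
    replace hω := not_le.2 hω
    rw [le_orderStat_iff _ hM (by omega), not_le] at hω
    obtain ⟨r, hr, hle⟩ := exists_card_residueClass_le (fun k => X k ω) L m hω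
    exact Set.mem_biUnion (mem_range.2 hr) hle
  have hclass : ∀ r ∈ range (m + 1),
      μ {ω | (#{k ∈ residueClass K (m + 1) r | L ≤ X k ω} : ℝ) ≤ M / (m + 1)} ≤
        ENNReal.ofReal (exp (-4 * ℓ)) := by
    intro r hr
    have hn : (K : ℝ) - (m + 1) ≤ (m + 1) * #(residueClass K (m + 1) r) := by
      have : K ≤ (m + 1) * (#(residueClass K (m + 1) r) + 1) :=
        (Nat.lt_mul_div_succ K m.succ_pos).le.trans <| Nat.mul_le_mul_left _ <|
          Nat.succ_le_succ (div_le_card_residueClass K m.succ_pos (mem_range.1 hr))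
      have : (K : ℝ) ≤ (m + 1) * (#(residueClass K (m + 1) r) + 1) := by exact_mod_cast this
      linarith
    rw [← ENNReal.ofReal_toReal (measure_ne_top μ _)]
    refine ENNReal.ofReal_le_ofReal ((measureReal_card_residueClass_le_le hX hdep zero_le_two
      htail r _).trans (Real.exp_le_exp.2 ?_))
    exact chernoff_exponent_le (by linarith [m.cast_nonneg (α := ℝ)])
      (by exact_mod_cast hK) hn M.cast_nonneg hℓ
  calc μ {ω | orderStat (fun k => X k ω) (K - M + 1) < L}
      ≤ ∑ r ∈ range (m + 1),
          μ {ω | (#{k ∈ residueClass K (m + 1) r | L ≤ X k ω} : ℝ) ≤ M / (m + 1)} :=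
        (measure_mono hbad).trans (measure_biUnion_finset_le _ _)
    _ ≤ ∑ _r ∈ range (m + 1), ENNReal.ofReal (exp (-4 * ℓ)) := sum_le_sum hclass
    _ = ENNReal.ofReal ((m + 1) * exp (-4 * ℓ)) := by
      rw [sum_const, card_range, nsmul_eq_mul, ENNReal.ofReal_mul (by positivity)]
      norm_cast

end RowBound

theorem ofReal_one_sub_le_measure {Ω : Type*} [MeasurableSpace Ω] {μ : Measure Ω}
    [IsProbabilityMeasure μ] {s : Set Ω} {δ : ℝ} (hδ : 0 ≤ δ) (h : μ sᶜ ≤ ENNReal.ofReal δ) :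
    ENNReal.ofReal (1 - δ) ≤ μ s := by
  rw [ENNReal.ofReal_sub _ hδ, ENNReal.ofReal_one, tsub_le_iff_right]
  calc 1 = μ Set.univ := measure_univ.symm
    _ ≤ μ s + μ sᶜ := measure_univ_le_add_compl s
    _ ≤ μ s + ENNReal.ofReal δ := by gcongr

theorem tendsto_natCast_mul_div_rpow_atTop {s : ℝ} (hs : 1 < s) (C : ℝ) :
    Tendsto (fun K : ℕ => K * (C / (K : ℝ) ^ s)) atTop (nhds 0) := by
  have := ((tendsto_rpow_neg_atTop (by linarith : 0 < s - 1)).comp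
    tendsto_natCast_atTop_atTop).const_mul C
  rw [mul_zero] at this
  refine this.congr' ((eventually_gt_atTop 0).mono fun K hK => ?_)
  have hK' : (0 : ℝ) < K := by exact_mod_cast hK
  simp only [Function.comp_apply, neg_sub, Real.rpow_sub hK', Real.rpow_one]
  ring

theorem eventually_measure_orderStat_lt_tailQuantile_le {m : ℕ} {ε : ℝ} {F : ℝ → ℝ}
    (hF : Continuous F) {M : ℕ → ℕ} (hM1 : Tendsto (fun K => (M K : ℝ)) atTop atTop)
    (hM2 : Tendsto (fun K => (M K : ℝ) / K) atTop (nhds 0))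
    (hM3 : ∀ K : ℕ, ((m : ℝ) + 1) * (1 + ε) * Real.log K ≤ M K) :
    ∀ᶠ K : ℕ in atTop, ∀ (Ω : Type) [MeasurableSpace Ω] (μ : Measure Ω) [IsProbabilityMeasure μ]
      (X : Fin K → Ω → ℝ), (∀ k, Measurable (X k)) → (∀ k, cdfOf μ (X k) = F) → MDepFam μ m X →
      μ {ω | tailQuantile F (exp 2 * M K / K) ≤ orderStat (fun k => X k ω) (K - M K + 1)}ᶜ ≤
        ENNReal.ofReal ((m + 1) / (K : ℝ) ^ (4 * (1 + ε))) := by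
  filter_upwards [hM1.eventually_ge_atTop 1,
    hM2.eventually (gt_mem_nhds (by norm_num : (0 : ℝ) < 1 / 8)),
    eventually_ge_atTop (20 * (m + 1))] with K hM hMK hK Ω _ μ _ X hX hcdf hdep
  have hK0 : (0 : ℝ) < K := by norm_cast; omega
  have hMK' : 8 * M K ≤ K := by
    rw [div_lt_iff₀ hK0] at hMK
    exact_mod_cast (by linarith : (8 * M K : ℝ) ≤ K)
  have hbound := measure_orderStat_lt_tailQuantile_le hF hX hcdf hdep (by exact_mod_cast hM) hMK'
    hK (ℓ := (1 + ε) * Real.log K) (by linarith [hM3 K])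
  simp only [Set.compl_ofPred, not_le]
  convert hbound using 2
  rw [Real.rpow_def_of_pos hK0, div_eq_mul_inv, ← Real.exp_neg]
  ring_nf

theorem stmt_18_general (m : ℕ) (ε : ℝ) (hε : 0 < ε)
    (F : ℝ → ℝ) (hFcont : Continuous F)
    (M : ℕ → ℕ)
    (hM1 : Tendsto (fun K => (M K : ℝ)) atTop atTop)
    (hM2 : Tendsto (fun K => (M K : ℝ) / K) atTop (nhds 0))
    (hM3 : ∀ K : ℕ, ((m : ℝ) + 1) * (1 + ε) * Real.log K ≤ M K)
    (L : ℕ → ℝ) (hL : ∀ K : ℕ, L K = tailQuantile F (Real.exp 2 * M K / K)) :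
    (∃ K₀ : ℕ, ∀ K : ℕ, K₀ < K →
      ∀ (Ω : Type) (_ : MeasurableSpace Ω) (μ : Measure Ω), IsProbabilityMeasure μ →
      ∀ X : Fin K → Ω → ℝ, (∀ k, Measurable (X k)) → (∀ k, cdfOf μ (X k) = F) →
        MDepFam μ m X →
        ENNReal.ofReal (1 - 2 * ((m : ℝ) + 1) / (K : ℝ) ^ (4 * (1 + ε))) ≤
          μ {ω | L K ≤ orderStat (fun k => X k ω) (K - M K + 1)}) ∧
    (∀ (Ω : ℕ → Type) (inst : ∀ K, MeasurableSpace (Ω K)) (μ : ∀ K, Measure (Ω K)),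
      (∀ K, IsProbabilityMeasure (μ K)) →
      ∀ X : ∀ K, Fin K → Fin K → Ω K → ℝ, (∀ K n k, Measurable (X K n k)) →
      (∀ K (n k : Fin K), cdfOf (μ K) (X K n k) = F) →
      (∀ K (n : Fin K), MDepFam (μ K) m (fun k => X K n k)) →
      Tendsto (fun K => μ K {ω | ∀ n : Fin K, L K ≤ orderStat (fun k => X K n k ω) (K - M K + 1)})
        atTop (nhds 1)) := by
  have hrow := eventually_measure_orderStat_lt_tailQuantile_le hFcont hM1 hM2 hM3
  simp only [← hL] at hrow
  constructor
  · obtain ⟨K₀, hK₀⟩ := eventually_atTop.1 hrow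
    refine ⟨K₀, fun K hK Ω _ μ _ X hX hcdf hdep => ?_⟩
    have hδ : 0 ≤ ((m : ℝ) + 1) / (K : ℝ) ^ (4 * (1 + ε)) := by positivity
    refine (ENNReal.ofReal_le_ofReal ?_).trans
      (ofReal_one_sub_le_measure hδ (hK₀ K hK.le Ω μ X hX hcdf hdep))
    linarith [mul_div_assoc 2 ((m : ℝ) + 1) ((K : ℝ) ^ (4 * (1 + ε)))]
  · intro Ω _ μ _ X hX hcdf hdep
    have hδ := tendsto_natCast_mul_div_rpow_atTop (by linarith : 1 < 4 * (1 + ε)) ((m : ℝ) + 1)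
    refine tendsto_of_tendsto_of_tendsto_of_le_of_le'
      (by simpa using ENNReal.tendsto_ofReal (hδ.const_sub 1)) tendsto_const_nhds ?_
      (Eventually.of_forall fun K => prob_le_one)
    filter_upwards [hrow] with K hK
    refine ofReal_one_sub_le_measure (by positivity) ?_
    rw [Set.ofPred_forall, Set.compl_iInter]
    calc μ K (⋃ n, _) ≤ ∑ _n : Fin K, ENNReal.ofReal (((m : ℝ) + 1) / (K : ℝ) ^ (4 * (1 + ε))) :=
          (measure_iUnion_fintype_le _ _).trans
            (sum_le_sum fun n _ => hK (Ω K) (μ K) _ (hX K n) (hcdf K n) (hdep K n))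
      _ = ENNReal.ofReal (K * (((m : ℝ) + 1) / (K : ℝ) ^ (4 * (1 + ε)))) := by
          rw [sum_const, card_univ, Fintype.card_fin, nsmul_eq_mul,
            ENNReal.ofReal_mul (by positivity), ENNReal.ofReal_natCast]

/-- let `F` be a continuous unbounded CDF, `M_K → ∞`, `M_K/K → 0`,
`M_K ≥ (m+1)(1+ε) ln K`, and `L_K = q̄_F(e² M_K / K)`. Then:
(1) there is `K₀` such that for every `K > K₀` and any identically `F`-distributed,
`m`-dependent `X_1,…,X_K`, `P(X_{(K-M_K+1)} ≥ L_K) ≥ 1 - 2(m+1)/K^{4(1+ε)}`;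
(2) for `N = K` such rows, `P(min_n X_{n,(K-M_K+1)} ≥ L_K) → 1`. -/
theorem stmt_18 (m : ℕ) (ε : ℝ) (hε : 0 < ε)
    (F : ℝ → ℝ) (hFcont : Continuous F) (hFunb : ∀ x, F x < 1)
    (M : ℕ → ℕ)
    (hM1 : Tendsto (fun K => (M K : ℝ)) atTop atTop)
    (hM2 : Tendsto (fun K => (M K : ℝ) / K) atTop (nhds 0))
    (hM3 : ∀ K : ℕ, ((m : ℝ) + 1) * (1 + ε) * Real.log K ≤ M K)
    (L : ℕ → ℝ) (hL : ∀ K : ℕ, L K = tailQuantile F (Real.exp 2 * M K / K)) :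
    (∃ K₀ : ℕ, ∀ K : ℕ, K₀ < K →
      ∀ (Ω : Type) (_ : MeasurableSpace Ω) (μ : Measure Ω), IsProbabilityMeasure μ →
      ∀ X : Fin K → Ω → ℝ, (∀ k, Measurable (X k)) → (∀ k, cdfOf μ (X k) = F) →
        MDepFam μ m X →
        ENNReal.ofReal (1 - 2 * ((m : ℝ) + 1) / (K : ℝ) ^ (4 * (1 + ε))) ≤
          μ {ω | L K ≤ orderStat (fun k => X k ω) (K - M K + 1)}) ∧
    (∀ (Ω : ℕ → Type) (inst : ∀ K, MeasurableSpace (Ω K)) (μ : ∀ K, Measure (Ω K)),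
      (∀ K, IsProbabilityMeasure (μ K)) →
      ∀ X : ∀ K, Fin K → Fin K → Ω K → ℝ, (∀ K n k, Measurable (X K n k)) →
      (∀ K (n k : Fin K), cdfOf (μ K) (X K n k) = F) →
      (∀ K (n : Fin K), MDepFam (μ K) m (fun k => X K n k)) →
      Tendsto (fun K => μ K {ω | ∀ n : Fin K, L K ≤ orderStat (fun k => X K n k ω) (K - M K + 1)})
        atTop (nhds 1)) :=
  stmt_18_general m ε hε F hFcont M hM1 hM2 hM3 L hL
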